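/- Let C_m and C_n be cycles and let v be any vertex of C_m□C_n. Then the betweenness centrality of v is: B(v) = (1/8)(mn−1)(m+n−4) when m and n are both odd; B(v) = (1/8)(mn² + m(m−4)n + 4) when m and n are both even; and B(v) = (1/8)[mn² + (m²−4m−1)n + 4] when m is odd and n is even. Equivalently, with m=2k₁+1, n=2k₂+1: B(v) = k₁k₂(k₁+k₂) + C(k₁,2) + C(k₂,2); with m=2k₁, n=2k₂: B(v) = k₁k₂(k₁+k₂−2) + 1/2; with m=2k₁+1, n=2k₂: B(v) = k₁k₂(k₁+k₂−1) + (1/2)(k₂−1)². -/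

import Mathlib

open SimpleGraph Finset

/-- The number of shortest `u`-`v` paths (geodesics) in `G`:
the number of paths from `u` to `v` whose length equals the distance `d_G(u,v)`. -/
noncomputable def geodesicCount {V : Type*} (G : SimpleGraph V) (u v : V) : ℕ :=
  Nat.card {p : G.Walk u v // p.IsPath ∧ p.length = G.dist u v}

/-- The number of shortest `u`-`v` paths in `G` that pass through the vertex `x`. -/
noncomputable def geodesicCountThrough {V : Type*} (G : SimpleGraph V) (u v x : V) : ℕ :=
  Nat.card {p : G.Walk u v // p.IsPath ∧ p.length = G.dist u v ∧ x ∈ p.support}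

/-- The pair-dependency of the pair `{u,v}` on `x`:
`δ(u,v|x) = σ(u,v|x) / σ(u,v)`. -/
noncomputable def pairDependency {V : Type*} (G : SimpleGraph V) (u v x : V) : ℚ :=
  (geodesicCountThrough G u v x : ℚ) / (geodesicCount G u v : ℚ)

/-- The betweenness centrality of a vertex `x`: the sum of the pair-dependencies
`σ(u,v|x)/σ(u,v)` over unordered pairs `{u,v}` with `u ≠ v`, `u ≠ x`, `v ≠ x`
(each unordered pair is counted once, hence the factor `1/2` over ordered pairs). -/
noncomputable def betweenness {V : Type*} [Fintype V] [DecidableEq V] (G : SimpleGraph V) (x : V) : ℚ :=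
  (1 / 2) * ∑ u, ∑ v,
    if u ≠ v ∧ u ≠ x ∧ v ≠ x then pairDependency G u v x else 0

/-!
Summing the betweenness over all vertices and exchanging the sums, a pair `u ≠ v` contributes
`∑_{x ∉ {u,v}} σ(u,v|x)/σ(u,v) = d(u,v) - 1`, because every geodesic from `u` to `v` has exactly
`d(u,v) + 1` vertices. In a vertex-transitive graph both the betweenness and the transmission
`∑_w d(y,w)` are constant, hence `B(x) = (∑_w d(y,w) - (|V| - 1)) / 2`. The torus `C_m □ C_n` is a
Cayley graph of `ℤ/m × ℤ/n`, distances add over the two factors, and the transmission of `C_m` is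
`⌊m²/4⌋`; substituting gives the three formulas.
-/

namespace SimpleGraph

variable {V W : Type*} {G : SimpleGraph V} {G' : SimpleGraph W}

lemma Reachable.dist_map_le {u v : V} (h : G.Reachable u v) (f : G →g G') :
    G'.dist (f u) (f v) ≤ G.dist u v := by
  obtain ⟨p, hp⟩ := h.exists_walk_length_eq_dist
  calc G'.dist (f u) (f v) ≤ (p.map f).length := dist_le _
    _ = G.dist u v := by rw [Walk.length_map, hp]

lemma Iso.dist_apply (φ : G ≃g G') (u v : V) : G'.dist (φ u) (φ v) = G.dist u v := by
  by_cases h : G.Reachable u v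
  · refine le_antisymm (h.dist_map_le φ.toHom) ?_
    simpa using (h.map φ.toHom).dist_map_le φ.symm.toHom
  · have h' : ¬G'.Reachable (φ u) (φ v) := fun h' => h (by simpa using h'.map φ.symm.toHom)
    rw [dist_eq_zero_of_not_reachable h, dist_eq_zero_of_not_reachable h']

lemma dist_boxProd {H : SimpleGraph W} (hG : G.Preconnected) (hH : H.Preconnected)
    (x y : V × W) : (G □ H).dist x y = G.dist x.1 y.1 + H.dist x.2 y.2 := by
  have h := edist_boxProd (G := G) (H := H) x y
  rw [← ((hG.boxProd hH) x y).coe_dist_eq_edist, ← (hG _ _).coe_dist_eq_edist,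
    ← (hH _ _).coe_dist_eq_edist] at h
  exact_mod_cast h

lemma sum_dist_boxProd [Fintype V] [Fintype W] {H : SimpleGraph W} (hG : G.Preconnected)
    (hH : H.Preconnected) (x : V × W) :
    ∑ y, (G □ H).dist x y =
      Fintype.card W * ∑ a, G.dist x.1 a + Fintype.card V * ∑ b, H.dist x.2 b := by
  simp only [dist_boxProd hG hH, Fintype.sum_prod_type, sum_add_distrib, sum_const, card_univ,
    smul_eq_mul, ← mul_sum]

lemma Walk.le_add_length {f : V → ℕ} (hf : ∀ a b, G.Adj a b → f a ≤ f b + 1) {u v : V}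
    (p : G.Walk u v) : f u ≤ f v + p.length := by
  induction p with
  | nil => simp
  | cons h _ ih =>
    have := hf _ _ h
    rw [Walk.length_cons]
    omega

lemma Reachable.le_add_dist {f : V → ℕ} (hf : ∀ a b, G.Adj a b → f a ≤ f b + 1) {u v : V}
    (h : G.Reachable u v) : f u ≤ f v + G.dist u v := by
  obtain ⟨p, hp⟩ := h.exists_walk_length_eq_dist
  exact hp ▸ p.le_add_length hf

def IsVertexTransitive (G : SimpleGraph V) : Prop :=
  ∀ x y : V, ∃ φ : G ≃g G, φ x = y

def IsAddInvariant [Add V] (G : SimpleGraph V) : Prop :=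
  ∀ u v d : V, G.Adj (u + d) (v + d) ↔ G.Adj u v

lemma IsAddInvariant.isVertexTransitive [AddGroup V] (hG : G.IsAddInvariant) :
    G.IsVertexTransitive :=
  fun x y => ⟨⟨Equiv.addRight (-x + y), fun {u v} => hG u v _⟩, by simp⟩

lemma IsAddInvariant.boxProd [AddGroup V] [AddGroup W] {H : SimpleGraph W}
    (hG : G.IsAddInvariant) (hH : H.IsAddInvariant) : (G □ H).IsAddInvariant := by
  intro u v d
  simp only [boxProd_adj, Prod.fst_add, Prod.snd_add, hG _ _, hH _ _, add_left_inj]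

end SimpleGraph

section Geodesics

variable {V W : Type*} [Fintype V] [Fintype W] (G : SimpleGraph V) {G' : SimpleGraph W}

open scoped Classical in
noncomputable def geodesics (u v : V) : Finset (G.Walk u v) :=
  {p : G.Walk u v | p.IsPath ∧ p.length = G.dist u v}.toFinset

variable {G}

lemma mem_geodesics {u v : V} {p : G.Walk u v} :
    p ∈ geodesics G u v ↔ p.IsPath ∧ p.length = G.dist u v := by
  simp [geodesics]

lemma geodesicCount_eq_card (u v : V) : geodesicCount G u v = #(geodesics G u v) :=
  Nat.subtype_card _ fun _ => mem_geodesics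

lemma geodesicCountThrough_eq_card [DecidableEq V] (u v x : V) :
    geodesicCountThrough G u v x = #{p ∈ geodesics G u v | x ∈ p.support} :=
  Nat.subtype_card _ fun _ => by rw [mem_filter, mem_geodesics, and_assoc]

lemma geodesicCountThrough_start (u v : V) :
    geodesicCountThrough G u v u = geodesicCount G u v := by
  classical
  rw [geodesicCountThrough_eq_card, geodesicCount_eq_card,
    filter_true_of_mem fun p _ => p.start_mem_support]

lemma geodesicCountThrough_end (u v : V) :
    geodesicCountThrough G u v v = geodesicCount G u v := by
  classical
  rw [geodesicCountThrough_eq_card, geodesicCount_eq_card,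
    filter_true_of_mem fun p _ => p.end_mem_support]

lemma geodesicCount_pos (hG : G.Connected) (u v : V) : 0 < geodesicCount G u v := by
  obtain ⟨p, hp, hlen⟩ := hG.exists_path_of_dist u v
  rw [geodesicCount_eq_card]
  exact card_pos.mpr ⟨p, mem_geodesics.mpr ⟨hp, hlen⟩⟩

lemma pairDependency_start (hG : G.Connected) (u v : V) : pairDependency G u v u = 1 := by
  have hσ : (geodesicCount G u v : ℚ) ≠ 0 := by exact_mod_cast (geodesicCount_pos hG u v).ne'
  rw [pairDependency, geodesicCountThrough_start, div_self hσ]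

lemma pairDependency_end (hG : G.Connected) (u v : V) : pairDependency G u v v = 1 := by
  have hσ : (geodesicCount G u v : ℚ) ≠ 0 := by exact_mod_cast (geodesicCount_pos hG u v).ne'
  rw [pairDependency, geodesicCountThrough_end, div_self hσ]

lemma sum_geodesicCountThrough [DecidableEq V] (u v : V) :
    ∑ x, geodesicCountThrough G u v x = geodesicCount G u v * (G.dist u v + 1) := by
  simp only [geodesicCountThrough_eq_card, geodesicCount_eq_card, card_filter]
  rw [sum_comm, ← smul_eq_mul, ← sum_const]
  refine sum_congr rfl fun p hp => ?_
  obtain ⟨hpath, hlen⟩ := mem_geodesics.mp hp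
  rw [← card_filter, ← hlen, ← Walk.length_support,
    ← List.toFinset_card_of_nodup hpath.support_nodup]
  congr 1
  ext
  simp

lemma geodesicCountThrough_le_of_iso (φ : G ≃g G') (u v x : V) :
    geodesicCountThrough G u v x ≤ geodesicCountThrough G' (φ u) (φ v) (φ x) := by
  classical
  rw [geodesicCountThrough_eq_card, geodesicCountThrough_eq_card]
  refine card_le_card_of_injOn (fun p => p.map φ.toHom) (fun p hp => ?_)
    (Walk.map_injective_of_injective φ.injective u v).injOn
  simp only [mem_coe, mem_filter, mem_geodesics] at hp ⊢
  obtain ⟨⟨hpath, hlen⟩, hx⟩ := hp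
  exact ⟨⟨hpath.map φ.injective, by rw [Walk.length_map, φ.dist_apply, hlen]⟩,
    by simpa [Walk.support_map] using hx⟩

lemma geodesicCountThrough_iso (φ : G ≃g G') (u v x : V) :
    geodesicCountThrough G' (φ u) (φ v) (φ x) = geodesicCountThrough G u v x :=
  le_antisymm (by simpa using geodesicCountThrough_le_of_iso φ.symm (φ u) (φ v) (φ x))
    (geodesicCountThrough_le_of_iso φ u v x)

lemma pairDependency_iso (φ : G ≃g G') (u v x : V) :
    pairDependency G' (φ u) (φ v) (φ x) = pairDependency G u v x := by
  simp only [pairDependency, ← geodesicCountThrough_start, geodesicCountThrough_iso]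

lemma betweenness_iso [DecidableEq V] [DecidableEq W] (φ : G ≃g G') (x : V) :
    betweenness G' (φ x) = betweenness G x := by
  unfold betweenness
  congr 1
  refine (Fintype.sum_equiv φ.toEquiv _ _ fun u => ?_).symm
  refine Fintype.sum_equiv φ.toEquiv _ _ fun v => ?_
  simp only [RelIso.coe_fn_toEquiv, φ.injective.ne_iff, pairDependency_iso]

end Geodesics

section Betweenness

variable {V : Type*} [Fintype V] [DecidableEq V] {G : SimpleGraph V}

lemma sum_pairDependency (hG : G.Connected) (u v : V) :
    ∑ x, pairDependency G u v x = G.dist u v + 1 := by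
  have hσ : (geodesicCount G u v : ℚ) ≠ 0 := by exact_mod_cast (geodesicCount_pos hG u v).ne'
  simp only [pairDependency, ← sum_div, ← Nat.cast_sum, sum_geodesicCountThrough]
  push_cast
  field_simp

lemma sum_pairDependency_interior (hG : G.Connected) (u v : V) :
    ∑ x, (if u ≠ v ∧ u ≠ x ∧ v ≠ x then pairDependency G u v x else 0) =
      (G.dist u v : ℚ) - 1 + if u = v then 1 else 0 := by
  by_cases huv : u = v
  · subst huv
    simp
  have h := sum_pairDependency hG u v
  rw [← sum_sdiff (subset_univ {u, v}), sum_pair huv, pairDependency_start hG,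
    pairDependency_end hG] at h
  have hinterior : ({x | u ≠ v ∧ u ≠ x ∧ v ≠ x} : Finset V) = univ \ {u, v} := by
    ext x
    simp only [ne_eq, huv, not_false_eq_true, true_and, mem_filter, mem_univ, mem_sdiff,
      mem_insert, mem_singleton, not_or]
    tauto
  rw [if_neg huv, add_zero, ← sum_filter, hinterior]
  linarith

theorem sum_betweenness (hG : G.Connected) :
    ∑ x, betweenness G x =
      (∑ u, ∑ v, (G.dist u v : ℚ) - Fintype.card V * (Fintype.card V - 1)) / 2 := by
  simp only [betweenness, ← mul_sum]
  rw [sum_comm]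
  conv_lhs => enter [2, 2, u]; rw [sum_comm]
  simp only [sum_pairDependency_interior hG]
  simp only [sum_add_distrib, sum_sub_distrib, sum_const, card_univ, nsmul_eq_mul, mul_one,
    sum_ite_eq, mem_univ, if_true]
  ring

end Betweenness

theorem SimpleGraph.IsVertexTransitive.betweenness_eq {V : Type*} [Fintype V] [DecidableEq V]
    {G : SimpleGraph V} (hG : G.Connected) (ht : G.IsVertexTransitive) (x y : V) :
    betweenness G x = (∑ w, (G.dist y w : ℚ) - (Fintype.card V - 1)) / 2 := by
  have hB : ∀ z, betweenness G z = betweenness G x := fun z => by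
    obtain ⟨φ, rfl⟩ := ht x z
    exact betweenness_iso φ x
  have hW : ∀ z, ∑ w, (G.dist z w : ℚ) = ∑ w, (G.dist y w : ℚ) := fun z => by
    obtain ⟨φ, rfl⟩ := ht y z
    exact (Fintype.sum_equiv φ.toEquiv _ _ fun w => by
      rw [RelIso.coe_fn_toEquiv, φ.dist_apply]).symm
  have h := sum_betweenness hG
  simp only [hB, hW, sum_const, card_univ, nsmul_eq_mul] at h
  have hN : (Fintype.card V : ℚ) ≠ 0 := by exact_mod_cast (Fintype.card_pos_iff.mpr ⟨x⟩).ne'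
  field_simp at h ⊢
  linear_combination h

theorem Nat.four_mul_sum_range_min_sub_add_mod_two :
    ∀ m : ℕ, 4 * ∑ i ∈ range m, min i (m - i) + m % 2 = m ^ 2
  | 0 => rfl
  | 1 => rfl
  | m + 2 => by
    have hshift : ∀ i ∈ range (m + 1), min (i + 1) (m + 2 - (i + 1)) = min i (m - i) + 1 := by
      intro i hi
      simp only [mem_range] at hi
      omega
    have step :
        ∑ i ∈ range (m + 2), min i (m + 2 - i) =
          ∑ i ∈ range m, min i (m - i) + (m + 1) := by
      rw [sum_range_succ', sum_congr rfl hshift, sum_add_distrib, sum_range_succ]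
      simp
    have ih := Nat.four_mul_sum_range_min_sub_add_mod_two m
    rw [step]
    ring_nf
    omega

namespace SimpleGraph

open scoped Fin.NatCast

variable {m : ℕ}

lemma cycleGraph_adj_min_val_le {a b : Fin m} (h : (cycleGraph m).Adj a b) :
    min a.val (m - a.val) ≤ min b.val (m - b.val) + 1 := by
  have hsub : ∀ x y : Fin m,
      (x - y).val = x.val - y.val ∨ (x - y).val = m + x.val - y.val ∧ x < y :=
    fun x y => (le_or_gt y x).imp Fin.sub_val_of_le fun hxy => ⟨Fin.coe_sub_iff_lt.mpr hxy, hxy⟩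
  rw [cycleGraph_adj'] at h
  have := a.isLt
  have := b.isLt
  rcases hsub a b with h₁ | ⟨h₁, h₁'⟩ <;>
    rcases hsub b a with h₂ | ⟨h₂, h₂'⟩ <;>
    simp only [Fin.lt_def] at * <;> omega

variable [NeZero m]

lemma isAddInvariant_cycleGraph : (cycleGraph m).IsAddInvariant := by
  intro u v d
  simp only [cycleGraph_adj', add_sub_add_right_eq_sub]

lemma cycleGraph_dist_add_one_le (u : Fin m) : (cycleGraph m).dist u (u + 1) ≤ 1 := by
  rcases (show m = 1 ∨ 1 < m by have := NeZero.pos m; omega) with rfl | hm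
  · simp
  · refine (dist_eq_one_iff_adj.mpr ?_).le
    rw [cycleGraph_adj', add_sub_cancel_left, Fin.val_one', Nat.mod_eq_of_lt hm]
    simp

lemma cycleGraph_dist_add_natCast_le (u : Fin m) (k : ℕ) :
    (cycleGraph m).dist u (u + k) ≤ k := by
  induction k with
  | zero => simp
  | succ k ih =>
    rw [Nat.cast_succ, ← add_assoc]
    calc (cycleGraph m).dist u (u + k + 1)
        ≤ (cycleGraph m).dist u (u + k) + (cycleGraph m).dist (u + k) (u + k + 1) :=
          (cycleGraph_preconnected u _).dist_triangle_left _
      _ ≤ k + 1 := add_le_add ih (cycleGraph_dist_add_one_le _)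

lemma cycleGraph_dist_zero_left (a : Fin m) :
    (cycleGraph m).dist 0 a = min a.val (m - a.val) := by
  refine le_antisymm (le_min ?_ ?_) ?_
  · simpa using cycleGraph_dist_add_natCast_le (0 : Fin m) a.val
  · have h : a + ((m - a.val : ℕ) : Fin m) = 0 := Fin.ext <| by
      rw [Fin.val_add, Fin.val_natCast, Nat.add_mod_mod, Nat.add_sub_cancel' a.isLt.le,
        Nat.mod_self, Fin.val_zero]
    rw [dist_comm]
    simpa [h] using cycleGraph_dist_add_natCast_le a (m - a.val)
  · simpa [dist_comm] using (cycleGraph_preconnected a 0).le_add_dist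
      (f := fun a : Fin m => min a.val (m - a.val)) fun _ _ => cycleGraph_adj_min_val_le

lemma cycleGraph_four_mul_sum_dist_add_mod_two :
    4 * ∑ a, (cycleGraph m).dist 0 a + m % 2 = m ^ 2 := by
  simp only [cycleGraph_dist_zero_left]
  rw [Fin.sum_univ_eq_sum_range (fun i => min i (m - i))]
  exact Nat.four_mul_sum_range_min_sub_add_mod_two m

end SimpleGraph

theorem betweenness_cycleBoxCycle_general (m n : ℕ)
    (v : Fin m × Fin n) :
    (Odd m → Odd n → betweenness (cycleGraph m □ cycleGraph n) v =
        (1 / 8) * ((m : ℚ) * n - 1) * ((m : ℚ) + n - 4)) ∧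
    (Even m → Even n → betweenness (cycleGraph m □ cycleGraph n) v =
        (1 / 8) * ((m : ℚ) * n ^ 2 + (m : ℚ) * ((m : ℚ) - 4) * n + 4)) ∧
    (Odd m → Even n → betweenness (cycleGraph m □ cycleGraph n) v =
        (1 / 8) * ((m : ℚ) * n ^ 2 + ((m : ℚ) ^ 2 - 4 * m - 1) * n + 4)) := by
  have : NeZero m := .of_pos v.1.pos
  have : NeZero n := .of_pos v.2.pos
  set Sm := ∑ a, (cycleGraph m).dist 0 a
  set Sn := ∑ b, (cycleGraph n).dist 0 b
  have htorus := (isAddInvariant_cycleGraph (m := m)).boxProd (isAddInvariant_cycleGraph (m := n))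
  have hB :
      betweenness (cycleGraph m □ cycleGraph n) v = (n * Sm + m * Sn - (m * n - 1)) / 2 := by
    rw [htorus.isVertexTransitive.betweenness_eq
      ⟨cycleGraph_preconnected.boxProd cycleGraph_preconnected⟩ v 0, ← Nat.cast_sum,
      sum_dist_boxProd cycleGraph_preconnected cycleGraph_preconnected]
    simp [Sm, Sn]
  have hSm : 4 * (Sm : ℚ) + (m % 2 : ℕ) = m ^ 2 := by
    exact_mod_cast cycleGraph_four_mul_sum_dist_add_mod_two
  have hSn : 4 * (Sn : ℚ) + (n % 2 : ℕ) = n ^ 2 := by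
    exact_mod_cast cycleGraph_four_mul_sum_dist_add_mod_two
  refine ⟨fun hm hn => ?_, fun hm hn => ?_, fun hm hn => ?_⟩ <;>
    rw [hB] <;>
    simp only [Nat.odd_iff, Nat.even_iff] at hm hn <;>
    simp only [hm, hn, Nat.cast_one, Nat.cast_zero] at hSm hSn <;>
    linear_combination (n / 8 : ℚ) * hSm + (m / 8 : ℚ) * hSn

/-- For cycles `C_m`, `C_n` (`m, n ≥ 3`) and any vertex `v` of
`C_m □ C_n`: if `m`, `n` are both odd then `B(v) = (1/8)(mn-1)(m+n-4)`; if both even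
then `B(v) = (1/8)(mn² + m(m-4)n + 4)`; if `m` is odd and `n` even then
`B(v) = (1/8)[mn² + (m²-4m-1)n + 4]`. -/
theorem betweenness_cycleBoxCycle (m n : ℕ) (hm : 3 ≤ m) (hn : 3 ≤ n)
    (v : Fin m × Fin n) :
    (Odd m → Odd n → betweenness (cycleGraph m □ cycleGraph n) v =
        (1 / 8) * ((m : ℚ) * n - 1) * ((m : ℚ) + n - 4)) ∧
    (Even m → Even n → betweenness (cycleGraph m □ cycleGraph n) v =
        (1 / 8) * ((m : ℚ) * n ^ 2 + (m : ℚ) * ((m : ℚ) - 4) * n + 4)) ∧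
    (Odd m → Even n → betweenness (cycleGraph m □ cycleGraph n) v =
        (1 / 8) * ((m : ℚ) * n ^ 2 + ((m : ℚ) ^ 2 - 4 * m - 1) * n + 4)) :=
  betweenness_cycleBoxCycle_general m n v
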